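/- Let m ≥ 1, let ⟪·,·⟫ be a nondegenerate symmetric bilinear form on ℝ^m, let B ⊆ ℝ^m be a convex body with normal cone N and recession cone R, and suppose v₀ is a nonzero vector with v₀ ∈ (int N) ∩ R. Then the function f : ∂B → ℝ, f(p) = ⟪p, v₀⟫, is proper and bounded below: for every a ∈ ℝ the sublevel set {p ∈ ∂B : ⟪p, v₀⟫ ≤ a} is compact, and there exists c ∈ ℝ with ⟪p, v₀⟫ ≥ c for all p ∈ B. -/

import Mathlib

/-!
Write `f p = ⟪p, v₀⟫`. Since `v₀` is a normal vector at some boundary point `p₀`, `f` is bounded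
below on `B` by `f p₀`. A nonzero recession direction `v` pairs nonnegatively with every normal
vector, hence with a whole neighbourhood of `v₀`; as `⟪v, ·⟫ ≠ 0` by nondegeneracy, this forces
`⟪v, v₀⟫ > 0`. If a sublevel set of `f` on `B` were unbounded, normalizing a divergent sequence
in it would give a unit recession direction `v` with `⟪v, v₀⟫ ≤ 0`. So the sublevel sets on `∂B`
are closed and bounded, hence compact.
-/

open Set

/-- The normal cone of a convex body `B` with respect to a bilinear form `form`. -/
def normalCone {m : ℕ}
    (form : EuclideanSpace ℝ (Fin m) →ₗ[ℝ] EuclideanSpace ℝ (Fin m) →ₗ[ℝ] ℝ)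
    (B : Set (EuclideanSpace ℝ (Fin m))) : Set (EuclideanSpace ℝ (Fin m)) :=
  {w | w ≠ 0 ∧ ∃ p ∈ frontier B, ∀ x ∈ B, 0 ≤ form (x - p) w}

/-- The recession cone of a convex body `B`. -/
def recessionCone {m : ℕ} (B : Set (EuclideanSpace ℝ (Fin m))) :
    Set (EuclideanSpace ℝ (Fin m)) :=
  {v | ∀ x ∈ B, ∀ t : ℝ, 0 ≤ t → x + t • v ∈ B}

open Filter Topology

section ConvexBody

variable {m : ℕ} {B : Set (EuclideanSpace ℝ (Fin m))}
  {form : EuclideanSpace ℝ (Fin m) →ₗ[ℝ] EuclideanSpace ℝ (Fin m) →ₗ[ℝ] ℝ}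

theorem exists_forall_le_form_of_mem_normalCone {w : EuclideanSpace ℝ (Fin m)}
    (hw : w ∈ normalCone form B) : ∃ c : ℝ, ∀ p ∈ B, c ≤ form p w := by
  obtain ⟨-, p₀, -, hp₀⟩ := hw
  refine ⟨form p₀ w, fun p hp => ?_⟩
  have := hp₀ p hp
  rw [map_sub, LinearMap.sub_apply] at this
  linarith

theorem form_nonneg_of_mem_recessionCone_of_mem_normalCone (hclosed : IsClosed B)
    {v w : EuclideanSpace ℝ (Fin m)} (hv : v ∈ recessionCone B) (hw : w ∈ normalCone form B) :
    0 ≤ form v w := by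
  obtain ⟨-, p, hp, hmin⟩ := hw
  simpa using hmin _ (hv p (hclosed.frontier_subset hp) 1 zero_le_one)

theorem form_pos_of_mem_recessionCone (hclosed : IsClosed B)
    (hnd : ∀ x, (∀ y, form x y = 0) → x = 0) {v₀ v : EuclideanSpace ℝ (Fin m)}
    (hv₀ : v₀ ∈ interior (normalCone form B)) (hv : v ∈ recessionCone B) (hv0 : v ≠ 0) :
    0 < form v v₀ := by
  obtain ⟨y, hy⟩ : ∃ y, form v y ≠ 0 := by
    by_contra! h
    exact hv0 (hnd v h)
  set z := form v y • y
  have hz : 0 < form v z := by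
    simpa [z] using mul_self_pos.mpr hy
  have hnear : ∀ᶠ t : ℝ in 𝓝 0, v₀ - t • z ∈ normalCone form B := by
    have hcont : Continuous fun t : ℝ => v₀ - t • z := by fun_prop
    exact hcont.continuousAt.preimage_mem_nhds (by simpa using mem_interior_iff_mem_nhds.mp hv₀)
  obtain ⟨t, ht, htN⟩ := hnear.exists_gt
  have hnonneg := form_nonneg_of_mem_recessionCone_of_mem_normalCone hclosed hv htN
  rw [map_sub, map_smul, smul_eq_mul] at hnonneg
  nlinarith

theorem mem_recessionCone_of_tendsto {ι : Type*} {l : Filter ι} [l.NeBot]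
    (hconv : Convex ℝ B) (hclosed : IsClosed B) {q : ι → EuclideanSpace ℝ (Fin m)}
    {x : EuclideanSpace ℝ (Fin m)} (hqB : ∀ i, q i ∈ B) (hnorm : Tendsto (‖q ·‖) l atTop)
    (hdir : Tendsto (fun i => ‖q i‖⁻¹ • q i) l (𝓝 x)) : x ∈ recessionCone B := by
  intro w hw t ht
  have hcoef : Tendsto (fun i => t / ‖q i‖) l (𝓝 0) := tendsto_const_nhds.div_atTop hnorm
  have hlim : Tendsto (fun i => (1 - t / ‖q i‖) • w + t • (‖q i‖⁻¹ • q i)) l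
      (𝓝 (w + t • x)) := by
    simpa using
      (((tendsto_const_nhds (x := (1 : ℝ))).sub hcoef).smul_const w).add (hdir.const_smul t)
  refine hclosed.mem_of_tendsto hlim ?_
  filter_upwards [hnorm.eventually_gt_atTop 0, hnorm.eventually_ge_atTop t] with i hpos hle
  have hcoef_le : t / ‖q i‖ ≤ 1 := (div_le_one hpos).mpr hle
  have hmem := hconv hw (hqB i) (by linarith) (by positivity) (sub_add_cancel 1 (t / ‖q i‖))
  rwa [smul_smul, ← div_eq_mul_inv]

theorem isBounded_sublevel_of_pos_on_recessionCone (hconv : Convex ℝ B) (hclosed : IsClosed B)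
    (f : EuclideanSpace ℝ (Fin m) →ₗ[ℝ] ℝ) (hf : ∀ v ∈ recessionCone B, v ≠ 0 → 0 < f v)
    (a : ℝ) : Bornology.IsBounded {p | p ∈ B ∧ f p ≤ a} := by
  by_contra hunb
  obtain ⟨q, hq, hqn⟩ : ∃ q : ℕ → EuclideanSpace ℝ (Fin m),
      (∀ n, q n ∈ B ∧ f (q n) ≤ a) ∧ ∀ n : ℕ, (n : ℝ) < ‖q n‖ := by
    simp only [isBounded_iff_forall_norm_le, not_exists, not_forall, not_le] at hunb
    choose q hq hqn using fun n : ℕ => hunb n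
    exact ⟨q, hq, hqn⟩
  have hpos : ∀ n, 0 < ‖q n‖ := fun n => (Nat.cast_nonneg n).trans_lt (hqn n)
  have hnorm : Tendsto (‖q ·‖) atTop atTop :=
    tendsto_atTop_mono (fun n => (hqn n).le) tendsto_natCast_atTop_atTop
  obtain ⟨x, hx, φ, hφ, hdir⟩ := (isCompact_sphere (0 : EuclideanSpace ℝ (Fin m)) 1).tendsto_subseq
    (x := fun n => ‖q n‖⁻¹ • q n) fun n => by
      rw [mem_sphere_zero_iff_norm, norm_smul, norm_inv, norm_norm, inv_mul_cancel₀ (hpos n).ne']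
  have hxR : x ∈ recessionCone B :=
    mem_recessionCone_of_tendsto hconv hclosed (fun n => (hq (φ n)).1)
      (hnorm.comp hφ.tendsto_atTop) hdir
  have hfx : f x ≤ 0 := by
    refine le_of_tendsto_of_tendsto' ((f.continuous_of_finiteDimensional.tendsto x).comp hdir)
      ((tendsto_const_nhds (x := a)).div_atTop (hnorm.comp hφ.tendsto_atTop)) fun n => ?_
    simp only [Function.comp_apply, map_smul, smul_eq_mul, inv_mul_eq_div]
    exact div_le_div_of_nonneg_right (hq (φ n)).2 (hpos (φ n)).le
  exact (hf x hxR (ne_zero_of_mem_unit_sphere ⟨x, hx⟩)).not_ge hfx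

end ConvexBody

theorem stmt_16_general {m : ℕ}
    (form : EuclideanSpace ℝ (Fin m) →ₗ[ℝ] EuclideanSpace ℝ (Fin m) →ₗ[ℝ] ℝ)
    (hnd : ∀ x, (∀ y, form x y = 0) → x = 0)
    (B : Set (EuclideanSpace ℝ (Fin m)))
    (hconv : Convex ℝ B) (hclosed : IsClosed B)
    (v₀ : EuclideanSpace ℝ (Fin m))
    (hv₀NR : v₀ ∈ interior (normalCone form B) ∩ recessionCone B) :
    (∀ a : ℝ, IsCompact {p | p ∈ frontier B ∧ form p v₀ ≤ a}) ∧
    (∃ c : ℝ, ∀ p ∈ B, c ≤ form p v₀) := by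
  refine ⟨fun a => ?_, exists_forall_le_form_of_mem_normalCone (interior_subset hv₀NR.1)⟩
  have hbdd := isBounded_sublevel_of_pos_on_recessionCone hconv hclosed (form.flip v₀)
    (fun v hv hv0 => form_pos_of_mem_recessionCone hclosed hnd hv₀NR.1 hv hv0) a
  refine Metric.isCompact_of_isClosed_isBounded ?_ (hbdd.subset fun p hp => ?_)
  · exact isClosed_frontier.inter
      (isClosed_le (form.flip v₀).continuous_of_finiteDimensional continuous_const)
  · exact ⟨hclosed.frontier_subset hp.1, hp.2⟩

theorem stmt_16 {m : ℕ} (hm : 1 ≤ m)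
    (form : EuclideanSpace ℝ (Fin m) →ₗ[ℝ] EuclideanSpace ℝ (Fin m) →ₗ[ℝ] ℝ)
    (hsymm : ∀ x y, form x y = form y x)
    (hnd : ∀ x, (∀ y, form x y = 0) → x = 0)
    (B : Set (EuclideanSpace ℝ (Fin m)))
    (hconv : Convex ℝ B) (hclosed : IsClosed B) (hint : (interior B).Nonempty)
    (v₀ : EuclideanSpace ℝ (Fin m)) (hv₀ : v₀ ≠ 0)
    (hv₀NR : v₀ ∈ interior (normalCone form B) ∩ recessionCone B) :
    (∀ a : ℝ, IsCompact {p | p ∈ frontier B ∧ form p v₀ ≤ a}) ∧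
    (∃ c : ℝ, ∀ p ∈ B, c ≤ form p v₀) :=
  stmt_16_general form hnd B hconv hclosed v₀ hv₀NR
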